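/- In the number field model, for every finite-index subgroup H ≤ ℤ^r there exists a constant C > 0 such that for every i ∈ I there is n ∈ H with 0 < λ_i(n) ≤ C and λ_j(n) < 0 for all j ∈ I with j ≠ i. -/

import Mathlib

noncomputable section

/-- The ambient space `ℝ^{r₁} ⊕ ℂ^{r₂}`. -/
abbrev Amb (r₁ r₂ : ℕ) : Type := (Fin r₁ → ℝ) × (Fin r₂ → ℂ)

/-- The multiplicative action of `θ ∈ K` on the ambient space, acting on the `i`-th
coordinate by multiplication by `σ_i(θ)`. -/
def mulK {K : Type} [Field K] {r₁ r₂ : ℕ} (σR : Fin r₁ → (K →+* ℝ))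
    (σC : Fin r₂ → (K →+* ℂ)) (θ : K) (x : Amb r₁ r₂) : Amb r₁ r₂ :=
  (fun i => σR i θ * x.1 i, fun j => σC j θ * x.2 j)

/-- The embedding `σ : K → ℝ^{r₁} ⊕ ℂ^{r₂}`. -/
def embK {K : Type} [Field K] {r₁ r₂ : ℕ} (σR : Fin r₁ → (K →+* ℝ))
    (σC : Fin r₂ → (K →+* ℂ)) (θ : K) : Amb r₁ r₂ :=
  (fun i => σR i θ, fun j => σC j θ)

/-- The image in `K` of a unit of the ring of integers. -/
def unitToK {K : Type} [Field K] [NumberField K] (u : (NumberField.RingOfIntegers K)ˣ) : K :=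
  algebraMap (NumberField.RingOfIntegers K) K (u : NumberField.RingOfIntegers K)

/-- The pairing `⟨ξ,x⟩ = Σ ξᵢxᵢ + Σ 2 Re(ξⱼxⱼ)` on the ambient space. -/
def pairAmb {r₁ r₂ : ℕ} (ξ x : Amb r₁ r₂) : ℝ :=
  (∑ i, ξ.1 i * x.1 i) + ∑ j, 2 * (ξ.2 j * x.2 j).re

/-- `σ(𝒪_K)`, as an additive subgroup of the ambient space. -/
def ringLat {K : Type} [Field K] [NumberField K] {r₁ r₂ : ℕ} (σR : Fin r₁ → (K →+* ℝ))
    (σC : Fin r₂ → (K →+* ℂ)) : AddSubgroup (Amb r₁ r₂) :=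
  AddSubgroup.closure
    (Set.range fun a : NumberField.RingOfIntegers K =>
      embK σR σC (algebraMap (NumberField.RingOfIntegers K) K a))

/-- The dual lattice `X̂` of `X = (ℝ^{r₁}⊕ℂ^{r₂})/Γ`. -/
def hatX {r₁ r₂ : ℕ} (Γ : AddSubgroup (Amb r₁ r₂)) : Set (Amb r₁ r₂) :=
  {ξ | ∀ γ ∈ Γ, ∃ m : ℤ, pairAmb ξ γ = (m : ℝ)}

/-- `(X̂²)^κ` for `κ ∈ K ∪ {∞}`, where `∞` is encoded as `none`. -/
def hatSq {K : Type} [Field K] {r₁ r₂ : ℕ} (σR : Fin r₁ → (K →+* ℝ))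
    (σC : Fin r₂ → (K →+* ℂ)) (Γ : AddSubgroup (Amb r₁ r₂)) :
    Option K → Set (Amb r₁ r₂ × Amb r₁ r₂)
  | some κ => {ξ | ξ.1 ∈ hatX Γ ∧ ξ.2 ∈ hatX Γ ∧ ξ.1 + mulK σR σC κ ξ.2 = 0}
  | none => {ξ | ξ.1 ∈ hatX Γ ∧ ξ.2 = 0}

/-- The subtorus `T^κ ⊆ X²`, defined as the annihilator of `(X̂²)^κ`. -/
def Tk {K : Type} [Field K] {r₁ r₂ : ℕ} (σR : Fin r₁ → (K →+* ℝ))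
    (σC : Fin r₂ → (K →+* ℂ)) (Γ : AddSubgroup (Amb r₁ r₂)) (κ : Option K) :
    Set ((Amb r₁ r₂ × Amb r₁ r₂) ⧸ Γ.prod Γ) :=
  {x | ∃ x' : Amb r₁ r₂ × Amb r₁ r₂,
    (QuotientAddGroup.mk x' : (Amb r₁ r₂ × Amb r₁ r₂) ⧸ Γ.prod Γ) = x ∧
    ∀ ξ ∈ hatSq σR σC Γ κ, ∃ m : ℤ, pairAmb ξ.1 x'.1 + pairAmb ξ.2 x'.2 = (m : ℝ)}

/-- The diagonal multiplicative action of `θ ∈ K` on `(ℝ^{r₁}⊕ℂ^{r₂})²`. -/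
def mulKsq {K : Type} [Field K] {r₁ r₂ : ℕ} (σR : Fin r₁ → (K →+* ℝ))
    (σC : Fin r₂ → (K →+* ℂ)) (θ : K) (x : Amb r₁ r₂ × Amb r₁ r₂) :
    Amb r₁ r₂ × Amb r₁ r₂ :=
  (mulK σR σC θ x.1, mulK σR σC θ x.2)

/-- The complex-valued `i`-th embedding, for `i` in the index set `I = Fin r₁ ⊕ Fin r₂`. -/
def embC {K : Type} [Field K] {r₁ r₂ : ℕ} (σR : Fin r₁ → (K →+* ℝ))
    (σC : Fin r₂ → (K →+* ℂ)) : Fin r₁ ⊕ Fin r₂ → K → ℂ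
  | Sum.inl i => fun θ => (σR i θ : ℂ)
  | Sum.inr j => fun θ => σC j θ

/-- `λ_i(n) = log |σ_i(ζ^n)|`. -/
def lam {K : Type} [Field K] [NumberField K] {r r₁ r₂ : ℕ} (σR : Fin r₁ → (K →+* ℝ))
    (σC : Fin r₂ → (K →+* ℂ)) (ζ : (Fin r → ℤ) → (NumberField.RingOfIntegers K)ˣ)
    (i : Fin r₁ ⊕ Fin r₂) (n : Fin r → ℤ) : ℝ :=
  Real.log (‖embC σR σC i (unitToK (ζ n))‖)

/-- The subspace `V^κ` of `(ℝ^{r₁}⊕ℂ^{r₂})²`, for `κ ∈ K ∪ {∞}`. -/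
def Vk {K : Type} [Field K] {r₁ r₂ : ℕ} (σR : Fin r₁ → (K →+* ℝ))
    (σC : Fin r₂ → (K →+* ℂ)) : Option K → Set (Amb r₁ r₂ × Amb r₁ r₂)
  | some κ => {v | v.2 = mulK σR σC κ v.1}
  | none => {v | v.1 = 0}

/-- The coordinate subspace `V_i` of `ℝ^{r₁}⊕ℂ^{r₂}`. -/
def Vslice (r₁ r₂ : ℕ) : Fin r₁ ⊕ Fin r₂ → Set (Amb r₁ r₂)
  | Sum.inl i => {x | (∀ i', i' ≠ i → x.1 i' = 0) ∧ x.2 = 0}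
  | Sum.inr j => {x | x.1 = 0 ∧ ∀ j', j' ≠ j → x.2 j' = 0}

/-- `V_i^□ = V_i ⊕ V_i ⊆ (ℝ^{r₁}⊕ℂ^{r₂})²`. -/
def VsliceSq (r₁ r₂ : ℕ) (i : Fin r₁ ⊕ Fin r₂) : Set (Amb r₁ r₂ × Amb r₁ r₂) :=
  {v | v.1 ∈ Vslice r₁ r₂ i ∧ v.2 ∈ Vslice r₁ r₂ i}

/-- The image of a subset of `X²` under `ζ_Δ^n`. -/
def setAct {K : Type} [Field K] [NumberField K] {r r₁ r₂ : ℕ} (σR : Fin r₁ → (K →+* ℝ))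
    (σC : Fin r₂ → (K →+* ℂ)) (Γ : AddSubgroup (Amb r₁ r₂))
    (ζ : (Fin r → ℤ) → (NumberField.RingOfIntegers K)ˣ) (n : Fin r → ℤ)
    (S : Set ((Amb r₁ r₂ × Amb r₁ r₂) ⧸ Γ.prod Γ)) :
    Set ((Amb r₁ r₂ × Amb r₁ r₂) ⧸ Γ.prod Γ) :=
  {y | ∃ x' : Amb r₁ r₂ × Amb r₁ r₂,
    (QuotientAddGroup.mk x' : (Amb r₁ r₂ × Amb r₁ r₂) ⧸ Γ.prod Γ) ∈ S ∧
    y = QuotientAddGroup.mk (mulKsq σR σC (unitToK (ζ n)) x')}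

/-- A `d`-dimensional homogeneous `ζ_Δ`-invariant subset
`L = {ζ_Δ^n·z' : n ∈ ℤ^r, z' ∈ z + T^κ}`. -/
def homogSet {K : Type} [Field K] [NumberField K] {r r₁ r₂ : ℕ} (σR : Fin r₁ → (K →+* ℝ))
    (σC : Fin r₂ → (K →+* ℂ)) (Γ : AddSubgroup (Amb r₁ r₂))
    (ζ : (Fin r → ℤ) → (NumberField.RingOfIntegers K)ˣ)
    (z : (Amb r₁ r₂ × Amb r₁ r₂) ⧸ Γ.prod Γ) (κ : Option K) :
    Set ((Amb r₁ r₂ × Amb r₁ r₂) ⧸ Γ.prod Γ) :=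
  {y | ∃ (n : Fin r → ℤ) (x' : Amb r₁ r₂ × Amb r₁ r₂),
    (QuotientAddGroup.mk x' : (Amb r₁ r₂ × Amb r₁ r₂) ⧸ Γ.prod Γ) ∈ (z + ·) '' Tk σR σC Γ κ ∧
    y = QuotientAddGroup.mk (mulKsq σR σC (unitToK (ζ n)) x')}


/-! Dirichlet's unit theorem gives, for each infinite place `w`, a unit `u` with `|u|_v < 1` at
every other place `v`, and the product formula `∑ mult v · log |u|_v = 0` forces `|u|_w > 1`.
Since `ζ(ℤ^r)` has finite index in the units and `H` has finite index in `ℤ^r`, some power `u^m`,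
`m > 0`, equals `ζ^n` with `n ∈ H`; then `λ_j(n) = m log |u|_{w_j}` has the required signs.
There are finitely many places, so one constant `C` bounds the finitely many `λ_i(n)`. -/

section

open NumberField NumberField.InfinitePlace Function

theorem NumberField.Units.exists_log_pos_and_log_neg {K : Type*} [Field K] [NumberField K]
    [Nontrivial (InfinitePlace K)] (w₀ : InfinitePlace K) :
    ∃ u : (𝓞 K)ˣ, 0 < Real.log (w₀ u) ∧ ∀ w ≠ w₀, Real.log (w u) < 0 := by
  classical
  obtain ⟨u, hu⟩ := Units.dirichletUnitTheorem.exists_unit K w₀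
  refine ⟨u, ?_, hu⟩
  have hothers : ∑ w ∈ Finset.univ.erase w₀, (w.mult : ℝ) * Real.log (w u) < 0 := by
    obtain ⟨w, hw⟩ := exists_ne w₀
    exact Finset.sum_neg (fun v hv => mul_neg_of_pos_of_neg (by exact_mod_cast mult_pos)
      (hu v (Finset.ne_of_mem_erase hv))) ⟨w, Finset.mem_erase.2 ⟨hw, Finset.mem_univ _⟩⟩
  have hsum := Finset.add_sum_erase Finset.univ
    (fun w : InfinitePlace K => (w.mult : ℝ) * Real.log (w u)) (Finset.mem_univ w₀)
  rw [Units.sum_mult_mul_log] at hsum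
  exact pos_of_mul_pos_right (a := (w₀.mult : ℝ)) (by linarith) (Nat.cast_nonneg _)

def NumberField.InfinitePlace.ofEmbeddings {K ι κ : Type*} [Field K] (σR : ι → K →+* ℝ)
    (σC : κ → K →+* ℂ) : ι ⊕ κ → InfinitePlace K :=
  Sum.elim (fun i => mk (Complex.ofRealHom.comp (σR i))) fun j => mk (σC j)

theorem NumberField.InfinitePlace.injective_ofEmbeddings {K ι κ : Type*} [Field K]
    {σR : ι → K →+* ℝ} {σC : κ → K →+* ℂ} (hσR : Injective σR) (hσC : Injective σC)
    (hσCconj : ∀ j j' : κ, (starRingEnd ℂ).comp (σC j) ≠ σC j') :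
    Injective (ofEmbeddings σR σC) := by
  have hreal (i : ι) : ComplexEmbedding.IsReal (Complex.ofRealHom.comp (σR i)) :=
    ComplexEmbedding.isReal_iff.2 <| RingHom.ext fun x => by simp
  refine Injective.sumElim (fun i i' h => hσR ?_) (fun j j' h => hσC ?_) fun i j h => ?_
  · refine (RingHom.cancel_left (g := Complex.ofRealHom) Complex.ofReal_injective).1 ?_
    rw [← embedding_mk_eq_of_isReal (hreal i), h, embedding_mk_eq_of_isReal (hreal i')]
  · exact (mk_eq_iff.1 h).resolve_right (hσCconj j j')
  · have hj := isReal_mk_iff.2 (hreal i)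
    rw [h, isReal_mk_iff, ComplexEmbedding.isReal_iff] at hj
    exact hσCconj j j hj

theorem exists_mem_eq_pow_of_index_ne_zero {A G : Type*} [AddCommGroup A] [CommGroup G]
    {ζ : A → G} (hζ : ∀ m n, ζ (m + n) = ζ m * ζ n)
    (hζfin : (Subgroup.closure (Set.range ζ)).index ≠ 0) {H : AddSubgroup A} (hH : H.index ≠ 0)
    (u : G) : ∃ n ∈ H, ∃ m : ℕ, 0 < m ∧ ζ n = u ^ m := by
  let f : Multiplicative A →* G := MonoidHom.mk' (fun a => ζ a.toAdd) fun a b => hζ _ _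
  have hle : Subgroup.closure (Set.range ζ) ≤ f.range :=
    Subgroup.closure_le _ |>.2 fun _ ⟨n, hn⟩ => ⟨.ofAdd n, hn⟩
  obtain ⟨a, ha⟩ := hle (Subgroup.pow_index_mem _ u)
  refine ⟨H.index • a.toAdd, H.nsmul_index_mem _, _, Nat.pos_of_ne_zero (mul_ne_zero hζfin hH), ?_⟩
  rw [pow_mul, ← ha, ← map_pow]
  rfl

theorem lam_eq_mul_log {K : Type} [Field K] [NumberField K] {r r₁ r₂ : ℕ}
    (σR : Fin r₁ → (K →+* ℝ)) (σC : Fin r₂ → (K →+* ℂ))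
    {ζ : (Fin r → ℤ) → (𝓞 K)ˣ} {n : Fin r → ℤ} {u : (𝓞 K)ˣ} {m : ℕ} (hn : ζ n = u ^ m)
    (i : Fin r₁ ⊕ Fin r₂) :
    lam σR σC ζ i n = m * Real.log (ofEmbeddings σR σC i u) := by
  cases i <;> simp [lam, hn, unitToK, embC, ofEmbeddings, InfinitePlace.apply, Real.log_pow]

end

theorem exists_expanding_one_direction_general
    {K : Type} [Field K] [NumberField K] (r r₁ r₂ : ℕ)
    (hr : r + 1 = r₁ + r₂) (hr2 : 2 ≤ r)
    (σR : Fin r₁ → (K →+* ℝ)) (σC : Fin r₂ → (K →+* ℂ))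
    (hσR : Function.Injective σR) (hσC : Function.Injective σC)
    (hσCconj : ∀ j j' : Fin r₂, (starRingEnd ℂ).comp (σC j) ≠ σC j')
    (ζ : (Fin r → ℤ) → (NumberField.RingOfIntegers K)ˣ)
    (hζhom : ∀ m n, ζ (m + n) = ζ m * ζ n)
    (hζfin : (Subgroup.closure (Set.range ζ)).index ≠ 0)
    :
    ∀ H : AddSubgroup (Fin r → ℤ), H.index ≠ 0 →
      ∃ C : ℝ, 0 < C ∧ ∀ i : Fin r₁ ⊕ Fin r₂, ∃ n ∈ H,
        0 < lam σR σC ζ i n ∧ lam σR σC ζ i n ≤ C ∧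
        ∀ j : Fin r₁ ⊕ Fin r₂, j ≠ i → lam σR σC ζ j n < 0
    := by
  intro H hH
  have hplace := NumberField.InfinitePlace.injective_ofEmbeddings hσR hσC hσCconj
  have hexists (i : Fin r₁ ⊕ Fin r₂) :
      ∃ n ∈ H, 0 < lam σR σC ζ i n ∧ ∀ j, j ≠ i → lam σR σC ζ j n < 0 := by
    obtain ⟨i', hi'⟩ : ∃ i', i' ≠ i := Fintype.exists_ne_of_one_lt_card
      (by simp only [Fintype.card_sum, Fintype.card_fin]; omega) i
    have : Nontrivial (NumberField.InfinitePlace K) := ⟨⟨_, _, hplace.ne hi'⟩⟩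
    obtain ⟨u, hu_pos, hu_neg⟩ := NumberField.Units.exists_log_pos_and_log_neg
      (NumberField.InfinitePlace.ofEmbeddings σR σC i)
    obtain ⟨n, hnH, m, hm, hn⟩ := exists_mem_eq_pow_of_index_ne_zero hζhom hζfin hH u
    have hm' : (0 : ℝ) < m := by exact_mod_cast hm
    refine ⟨n, hnH, ?_, fun j hj => ?_⟩
    · rw [lam_eq_mul_log σR σC hn]
      exact mul_pos hm' hu_pos
    · rw [lam_eq_mul_log σR σC hn]
      exact mul_neg_of_pos_of_neg hm' (hu_neg _ (hplace.ne hj))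
  choose n hnH hpos hneg using hexists
  obtain ⟨C, hC⟩ := Finite.exists_le fun i => lam σR σC ζ i (n i)
  exact ⟨max C 1, by positivity,
    fun i => ⟨n i, hnH i, hpos i, (hC i).trans (le_max_left _ _), hneg i⟩⟩

theorem exists_expanding_one_direction
    {K : Type} [Field K] [NumberField K] (r r₁ r₂ d : ℕ)
    (hr : r + 1 = r₁ + r₂) (hr2 : 2 ≤ r)
    (hd : Module.finrank ℚ K = d) (hd2 : r₁ + 2 * r₂ = d)
    (σR : Fin r₁ → (K →+* ℝ)) (σC : Fin r₂ → (K →+* ℂ))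
    (hσR : Function.Injective σR) (hσC : Function.Injective σC)
    (hσCconj : ∀ j j' : Fin r₂, (starRingEnd ℂ).comp (σC j) ≠ σC j')
    (hCM : ¬(r₁ = 0 ∧ ∃ F : IntermediateField ℚ K, Module.finrank F K = 2 ∧
        ∀ φ : F →+* ℂ, ∀ x : F, (φ x).im = 0))
    (ζ : (Fin r → ℤ) → (NumberField.RingOfIntegers K)ˣ)
    (hζhom : ∀ m n, ζ (m + n) = ζ m * ζ n)
    (hζinj : Function.Injective ζ)
    (hζfin : (Subgroup.closure (Set.range ζ)).index ≠ 0)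
    :
    ∀ H : AddSubgroup (Fin r → ℤ), H.index ≠ 0 →
      ∃ C : ℝ, 0 < C ∧ ∀ i : Fin r₁ ⊕ Fin r₂, ∃ n ∈ H,
        0 < lam σR σC ζ i n ∧ lam σR σC ζ i n ≤ C ∧
        ∀ j : Fin r₁ ⊕ Fin r₂, j ≠ i → lam σR σC ζ j n < 0 :=
  exists_expanding_one_direction_general r r₁ r₂ hr hr2 σR σC hσR hσC hσCconj ζ hζhom hζfin

end
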